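/- The class of languages accepted by repetitive deterministic finite automata with translucent words (RDFAwtws) is properly contained in the class of languages accepted by repetitive nondeterministic finite automata with translucent words (RNFAwtws): every language accepted by an RDFAwtw is accepted by an RNFAwtw, and the language L_∨ = { w ∈ {a,b}* : ∃ n ≥ 0, |w|_a = n and |w|_b ∈ {n, 2n} } is accepted by an RNFAwtw but by no RDFAwtw. -/

import Mathlib

/-! Repetitive (non)deterministic finite automata with translucent words. -/

/-- Behavior of the automaton at the end-of-tape marker: halt accepting,
halt rejecting, or (in the repetitive case) continue in one of a set of states. -/
inductive EndBehavior (Q : Type) : Type where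
  | accept : EndBehavior Q
  | reject : EndBehavior Q
  | cont : Set Q → EndBehavior Q

/-- `InStar S w` means `w` belongs to the Kleene star `S*` of the set of words `S`. -/
def InStar {α : Type} (S : Set (List α)) (w : List α) : Prop :=
  ∃ l : List (List α), (∀ u ∈ l, u ∈ S) ∧ l.flatten = w

/-- A (repetitive) nondeterministic finite automaton with translucent words,
with state set `Q` over the alphabet `α`.  `tl q` is the set `τ(q)` of
translucent words of the state `q`, `delta` is the transition function and
`endB q` is the behavior at the end-of-tape marker.  The fields `tl_fin`,
`code_ne`, `prefix_code` and `tl_head` express that each `τ(q)` is finite,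
that `τ(q) ∪ Σ_q` is a prefix code (no empty word, and no member is a proper
prefix of another member), and that no word of `τ(q)` begins with a letter
readable in `q`. -/
structure RNFAwtw (α : Type) (Q : Type) : Type where
  init : Set Q
  tl : Q → Set (List α)
  delta : Q → α → Set Q
  endB : Q → EndBehavior Q
  tl_fin : ∀ q, (tl q).Finite
  code_ne : ∀ q, [] ∉ tl q
  prefix_code : ∀ q,
    ∀ u ∈ tl q ∪ {w | ∃ a, (delta q a).Nonempty ∧ w = [a]},
    ∀ v ∈ tl q ∪ {w | ∃ a, (delta q a).Nonempty ∧ w = [a]},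
      u <+: v → u = v
  tl_head : ∀ q, ∀ t ∈ tl q, ∀ a, (delta q a).Nonempty → ¬ [a] <+: t

/-- Configurations: a pair of a state and the remaining tape content, or one
of the two halting configurations. -/
inductive Conf (α Q : Type) : Type where
  | state : Q → List α → Conf α Q
  | accept : Conf α Q
  | reject : Conf α Q

/-- The single-step computation relation of an RNFAwtw. -/
inductive RNFAwtw.Step {α Q : Type} (A : RNFAwtw α Q) :
    Conf α Q → Conf α Q → Prop where
  | read {q q' : Q} {a : α} {u v : List α} :
      InStar (A.tl q) u → q' ∈ A.delta q a →
      RNFAwtw.Step A (Conf.state q (u ++ a :: v)) (Conf.state q' (u ++ v))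
  | stuck {q : Q} {a : α} {u v : List α} :
      InStar (A.tl q) u → A.delta q a = ∅ →
      (∀ t ∈ A.tl q, ¬ t <+: (a :: v)) →
      RNFAwtw.Step A (Conf.state q (u ++ a :: v)) Conf.reject
  | haltAccept {q : Q} {w : List α} :
      InStar (A.tl q) w → A.endB q = EndBehavior.accept →
      RNFAwtw.Step A (Conf.state q w) Conf.accept
  | haltReject {q : Q} {w : List α} :
      InStar (A.tl q) w → A.endB q = EndBehavior.reject →
      RNFAwtw.Step A (Conf.state q w) Conf.reject
  | goOn {q q' : Q} {w : List α} {S : Set Q} :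
      InStar (A.tl q) w → A.endB q = EndBehavior.cont S → q' ∈ S →
      RNFAwtw.Step A (Conf.state q w) (Conf.state q' w)

/-- `A` accepts the word `w`. -/
def RNFAwtw.Accepts {α Q : Type} (A : RNFAwtw α Q) (w : List α) : Prop :=
  ∃ q0 ∈ A.init, Relation.ReflTransGen A.Step (Conf.state q0 w) Conf.accept

/-- The language accepted by `A`. -/
def RNFAwtw.lang {α Q : Type} (A : RNFAwtw α Q) : Set (List α) :=
  { w | A.Accepts w }

/-- `A` is deterministic: one initial state, at most one transition per
state/letter pair, and at the end-of-tape marker the continuation (if any)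
is a single state. -/
def RNFAwtw.Deterministic {α Q : Type} (A : RNFAwtw α Q) : Prop :=
  (∃ q0, A.init = {q0}) ∧
  (∀ q a, (A.delta q a).Subsingleton) ∧
  (∀ q S, A.endB q = EndBehavior.cont S → ∃ q', S = {q'})

/-- `A` is non-repetitive: at the end-of-tape marker it always halts. -/
def RNFAwtw.NonRepetitive {α Q : Type} (A : RNFAwtw α Q) : Prop :=
  ∀ q S, A.endB q ≠ EndBehavior.cont S

/-- `L` is accepted by some repetitive NFAwtw (with a finite state set). -/
def AcceptedByRNFAwtw {α : Type} (L : Set (List α)) : Prop :=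
  ∃ (Q : Type) (_ : Finite Q) (A : RNFAwtw α Q), A.lang = L

/-- `L` is accepted by some repetitive DFAwtw. -/
def AcceptedByRDFAwtw {α : Type} (L : Set (List α)) : Prop :=
  ∃ (Q : Type) (_ : Finite Q) (A : RNFAwtw α Q), A.Deterministic ∧ A.lang = L

/-- `L` is accepted by some (non-repetitive) NFAwtw. -/
def AcceptedByNFAwtw {α : Type} (L : Set (List α)) : Prop :=
  ∃ (Q : Type) (_ : Finite Q) (A : RNFAwtw α Q), A.NonRepetitive ∧ A.lang = L

/-- `L` is accepted by some (non-repetitive) DFAwtw. -/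
def AcceptedByDFAwtw {α : Type} (L : Set (List α)) : Prop :=
  ∃ (Q : Type) (_ : Finite Q) (A : RNFAwtw α Q),
    A.NonRepetitive ∧ A.Deterministic ∧ A.lang = L

/-- The two-letter alphabet `{a, b}`. -/
inductive Letter : Type where
  | a : Letter
  | b : Letter
deriving DecidableEq

instance : Fintype Letter where
  elems := {Letter.a, Letter.b}
  complete := by intro x; cases x <;> simp

/-- `L_∨ = { w ∈ {a,b}* : ∃ n ≥ 0, |w|_a = n and |w|_b ∈ {n, 2n} }`. -/
def Lvee : Set (List Letter) :=
  { w | ∃ n : ℕ, w.count Letter.a = n ∧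
      (w.count Letter.b = n ∨ w.count Letter.b = 2 * n) }


/-!
`L_∨` is accepted by a nondeterministic automaton that guesses whether `|w|_b = |w|_a` or
`|w|_b = 2|w|_a` and then repeatedly deletes the leftmost `a` followed by the leftmost one or two
`b`s, the other letter being translucent.

Conversely, let a deterministic automaton `A` accept `L_∨`, and let `L` bound the lengths of its
translucent words. Started on `aⁱbʲ`, `A` only visits configurations `(q, aⁱ'bʲ')`. A
factorisation into translucent words of a word beginning (ending) with more than `L` copies of a
letter begins (ends) with a pure power of that letter, whose length divides `L!`; hence a run whose
exponents stay above `L` can be replayed with both exponents raised by multiples of `L!`. So the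
accepting run on `aⁿbⁿ`, for `n` a large multiple of `L!`, must bring an exponent down to `L`
(else it would accept `aⁿ⁺ᴸ!bⁿ`), and we may pick on it `|Q|·L!² + 1` configurations with
distinct exponent sums and both exponents above `L`. Two of them agree in state and in exponents
modulo `L!`, and by determinism one is reached from the other, consuming `(α, β)`. Pumping this
loop makes `A` accept `aⁿ⁺ᵅbⁿ⁺ᵝ` and, replaying the same run with `n` more `b`s, also
`aⁿ⁺ᵅb²ⁿ⁺ᵝ`. Hence `β = α` and `β = 2α`, so `α = β = 0`, contradicting the distinct sums.
-/

open List Relation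
open scoped Nat

namespace InStar

variable {α : Type} {S : Set (List α)} {u v w : List α} {x : α} {L i j Δ : ℕ}

theorem nil (S : Set (List α)) : InStar S [] := ⟨[], by simp⟩

theorem append (hu : InStar S u) (hv : InStar S v) : InStar S (u ++ v) := by
  obtain ⟨l₁, h₁, rfl⟩ := hu
  obtain ⟨l₂, h₂, rfl⟩ := hv
  exact ⟨l₁ ++ l₂, by simpa [or_imp, forall_and] using And.intro h₁ h₂, by simp⟩

theorem flatten_replicate (h : w ∈ S) (k : ℕ) : InStar S (replicate k w).flatten :=
  ⟨replicate k w, fun _ hu => eq_of_mem_replicate hu ▸ h, rfl⟩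

theorem of_forall_singleton_mem (h : ∀ x ∈ w, [x] ∈ S) : InStar S w :=
  ⟨w.map ([·]), by simpa using h, by induction w <;> simp_all⟩

theorem exists_mem_prefix (h : InStar S w) (hw : w ≠ []) : ∃ t ∈ S, t <+: w := by
  obtain ⟨_ | ⟨t, l⟩, hl, rfl⟩ := h
  · exact absurd rfl hw
  · exact ⟨t, hl t mem_cons_self, prefix_append _ _⟩

theorem exists_mem_suffix (h : InStar S w) (hw : w ≠ []) : ∃ t ∈ S, t <:+ w := by
  obtain ⟨l, hl, rfl⟩ := h
  rcases eq_nil_or_concat' l with rfl | ⟨l, t, rfl⟩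
  · exact absurd rfl hw
  · exact ⟨t, hl t (by simp), by simp⟩

theorem of_append (hS : ∀ s ∈ S, ∀ t ∈ S, s <+: t → s = t) (hu : InStar S u)
    (h : InStar S (u ++ v)) : InStar S v := by
  obtain ⟨l, hl, rfl⟩ := hu
  induction l with
  | nil => simpa using h
  | cons t l ih =>
    obtain ⟨_ | ⟨t', m⟩, hm, he⟩ := h
    · rw [flatten_nil, eq_comm, append_eq_nil_iff] at he
      exact he.2 ▸ nil S
    · have ht : t ∈ S := hl t mem_cons_self
      have ht' : t' ∈ S := hm t' mem_cons_self
      simp only [flatten_cons, append_assoc] at he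
      obtain rfl : t' = t := by
        rcases prefix_or_prefix_of_prefix (prefix_append t' _) (he ▸ prefix_append t _) with h | h
        · exact hS _ ht' _ ht h
        · exact (hS _ ht _ ht' h).symm
      exact ih (fun s hs => hl s (mem_cons_of_mem _ hs))
        ⟨m, fun s hs => hm s (mem_cons_of_mem _ hs), append_cancel_left he⟩

theorem replicate_append (hne : [] ∉ S) (hL : ∀ t ∈ S, t.length ≤ L) (hi : L < i)
    (h : InStar S (replicate i x ++ w)) (hΔ : L ! ∣ Δ) :
    InStar S (replicate Δ x ++ (replicate i x ++ w)) := by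
  obtain ⟨t, ht, htw⟩ := h.exists_mem_prefix
    (by simp only [ne_eq, append_eq_nil_iff, replicate_eq_nil_iff, not_and]; omega)
  have hlen := hL t ht
  obtain ⟨-, htx⟩ := prefix_replicate_iff.1 <|
    prefix_of_prefix_length_le htw (prefix_append _ _) (by rw [length_replicate]; omega)
  have hpos : 0 < t.length := length_pos_iff.2 fun h => hne (h ▸ ht)
  obtain ⟨k, rfl⟩ := (Nat.dvd_factorial hpos hlen).trans hΔ
  rw [mul_comm, ← flatten_replicate_replicate, ← htx]
  exact (flatten_replicate ht k).append h

theorem append_replicate (hne : [] ∉ S) (hL : ∀ t ∈ S, t.length ≤ L) (hj : L < j)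
    (h : InStar S (w ++ replicate j x)) (hΔ : L ! ∣ Δ) :
    InStar S (w ++ replicate j x ++ replicate Δ x) := by
  obtain ⟨t, ht, htw⟩ := h.exists_mem_suffix
    (by simp only [ne_eq, append_eq_nil_iff, replicate_eq_nil_iff, not_and]; omega)
  have hlen := hL t ht
  obtain ⟨-, htx⟩ := suffix_replicate_iff.1 <|
    suffix_of_suffix_length_le htw (suffix_append _ _) (by rw [length_replicate]; omega)
  have hpos : 0 < t.length := length_pos_iff.2 fun h => hne (h ▸ ht)
  obtain ⟨k, rfl⟩ := (Nat.dvd_factorial hpos hlen).trans hΔ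
  rw [mul_comm, ← flatten_replicate_replicate, ← htx]
  exact h.append (flatten_replicate ht k)

end InStar

namespace RNFAwtw

variable {α Q : Type} (A : RNFAwtw α Q) {q : Q} {x x' : α} {u u' v v' : List α}

theorem exists_tl_prefix (hu : InStar (A.tl q) u) (h : InStar (A.tl q) (u ++ v))
    (hv : v ≠ []) : ∃ t ∈ A.tl q, t <+: v :=
  (hu.of_append (fun s hs t ht => A.prefix_code q s (.inl hs) t (.inl ht)) h).exists_mem_prefix hv

theorem not_tl_prefix_of_readable (hx : (A.delta q x).Nonempty) {t : List α}
    (ht : t ∈ A.tl q) : ¬ t <+: x :: v := by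
  rintro ⟨s, hs⟩
  obtain _ | ⟨y, t'⟩ := t
  · exact A.code_ne q ht
  · obtain ⟨rfl, -⟩ := cons_eq_cons.1 hs
    exact A.tl_head q _ ht y hx ⟨t', rfl⟩

theorem eq_of_append_cons_eq_append_cons (hu : InStar (A.tl q) u) (hu' : InStar (A.tl q) u')
    (hb : ∀ t ∈ A.tl q, ¬ t <+: x :: v) (hb' : ∀ t ∈ A.tl q, ¬ t <+: x' :: v')
    (h : u ++ x :: v = u' ++ x' :: v') : u = u' ∧ x = x' ∧ v = v' := by
  rcases append_eq_append_iff.1 h with ⟨m, rfl, hm⟩ | ⟨m, rfl, hm⟩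
  · rcases eq_or_ne m [] with rfl | hne
    · simpa using hm
    · obtain ⟨t, ht, htm⟩ := A.exists_tl_prefix hu hu' hne
      exact (hb t ht (hm ▸ htm.trans (prefix_append _ _))).elim
  · rcases eq_or_ne m [] with rfl | hne
    · simpa [eq_comm] using hm
    · obtain ⟨t, ht, htm⟩ := A.exists_tl_prefix hu' hu hne
      exact (hb' t ht (hm ▸ htm.trans (prefix_append _ _))).elim

theorem not_step_accept {c : Conf α Q} : ¬ A.Step .accept c := nofun

theorem not_step_reject {c : Conf α Q} : ¬ A.Step .reject c := nofun

/-- A non-halting step from `(q, w)` cuts `w` as `u ++ x :: v` with `u ∈ τ(q)*` and no word of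
`τ(q)` a prefix of `x :: v`. As `τ(q)` is a prefix code there is at most one such cut, and there
is none when `w ∈ τ(q)*`. -/
theorem Deterministic.rightUnique {A : RNFAwtw α Q} (hdet : A.Deterministic) :
    Relator.RightUnique A.Step := by
  obtain ⟨-, hδ, hend⟩ := hdet
  have blocked {q x v} (hx : (A.delta q x).Nonempty) : ∀ t ∈ A.tl q, ¬ t <+: x :: v :=
    fun _ => A.not_tl_prefix_of_readable hx
  have not_halt {q x u v} (hu : InStar (A.tl q) u) (hw : InStar (A.tl q) (u ++ x :: v))
      (hb : ∀ t ∈ A.tl q, ¬ t <+: x :: v) : False := by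
    obtain ⟨t, ht, htv⟩ := A.exists_tl_prefix hu hw (cons_ne_nil _ _)
    exact hb t ht htv
  intro c c₁ c₂ h₁ h₂
  cases h₁ with
  | read hu hq =>
    generalize hw : _ ++ _ :: _ = w at h₂
    cases h₂ with
    | read hu' hq' =>
      obtain ⟨rfl, rfl, rfl⟩ := A.eq_of_append_cons_eq_append_cons hu hu'
        (blocked ⟨_, hq⟩) (blocked ⟨_, hq'⟩) hw
      rw [hδ _ _ hq hq']
    | stuck hu' hd hb =>
      obtain ⟨-, rfl, -⟩ := A.eq_of_append_cons_eq_append_cons hu hu' (blocked ⟨_, hq⟩) hb hw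
      simp [hd] at hq
    | haltAccept hw' | haltReject hw' | goOn hw' =>
      exact (not_halt hu (hw ▸ hw') (blocked ⟨_, hq⟩)).elim
  | stuck hu hd hb =>
    generalize hw : _ ++ _ :: _ = w at h₂
    cases h₂ with
    | read hu' hq' =>
      obtain ⟨-, rfl, -⟩ := A.eq_of_append_cons_eq_append_cons hu hu' hb (blocked ⟨_, hq'⟩) hw
      simp [hd] at hq'
    | stuck | haltReject => rfl
    | haltAccept hw' | goOn hw' => exact (not_halt hu (hw ▸ hw') hb).elim
  | haltAccept hw he | haltReject hw he | goOn hw he hq =>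
    cases h₂ with
    | read hu' hq' => exact (not_halt hu' hw (blocked ⟨_, hq'⟩)).elim
    | stuck hu' _ hb => exact (not_halt hu' hw hb).elim
    | haltAccept _ he' | haltReject _ he' | goOn _ he' hq' =>
      cases he.symm.trans he' <;> first
        | rfl
        | obtain ⟨p, rfl⟩ := hend _ _ he
          rw [Set.mem_singleton_iff.1 hq, Set.mem_singleton_iff.1 hq']

theorem reflTransGen_accept_of_reflTransGen {A : RNFAwtw α Q} (hdet : A.Deterministic)
    {c c' : Conf α Q} (h : ReflTransGen A.Step c c') (hc : ReflTransGen A.Step c .accept) :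
    ReflTransGen A.Step c' .accept := by
  rcases h.total_of_right_unique hdet.rightUnique hc with h | h
  · exact h
  · rcases h.cases_head with rfl | ⟨_, hs, -⟩
    · rfl
    · exact (A.not_step_accept hs).elim

theorem exists_step_accept_of_reflTransGen {w : List α}
    (h : ReflTransGen A.Step (.state q w) .accept) :
    ∃ q' w', ReflTransGen A.Step (.state q w) (.state q' w') ∧ A.Step (.state q' w') .accept := by
  obtain ⟨c, hc, hs⟩ := h.cases_tail.resolve_left nofun
  cases c with
  | state q' w' => exact ⟨q', w', hc, hs⟩
  | accept => exact (A.not_step_accept hs).elim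
  | reject => exact (A.not_step_reject hs).elim

theorem step_erase [DecidableEq α] {q' : Q} {w : List α} (hτ : ∀ y ≠ x, [y] ∈ A.tl q)
    (hq : q' ∈ A.delta q x) (hx : x ∈ w) : A.Step (.state q w) (.state q' (w.erase x)) := by
  obtain ⟨u, v, hxu, rfl, he⟩ := exists_erase_eq hx
  rw [he]
  exact .read (.of_forall_singleton_mem fun y hy => hτ y (ne_of_mem_of_not_mem hy hxu)) hq

theorem exists_tl_length_le [Finite Q] : ∃ L, ∀ q, ∀ t ∈ A.tl q, t.length ≤ L := by
  obtain ⟨L, hL⟩ := ((Set.finite_iUnion A.tl_fin).image length).bddAbove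
  exact ⟨L, fun q t ht => hL ⟨t, Set.mem_iUnion.2 ⟨q, ht⟩, rfl⟩⟩

end RNFAwtw

def abWord (i j : ℕ) : List Letter := replicate i .a ++ replicate j .b

section abWord

variable {u v w : List Letter} {x : Letter} {i j i' j' k : ℕ}

@[simp] theorem count_a_abWord : (abWord i j).count .a = i := by
  simp [abWord, count_replicate]

@[simp] theorem count_b_abWord : (abWord i j).count .b = j := by
  simp [abWord, count_replicate]

theorem abWord_inj : abWord i j = abWord i' j' ↔ i = i' ∧ j = j' := by
  refine ⟨fun h => ⟨?_, ?_⟩, by rintro ⟨rfl, rfl⟩; rfl⟩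
  · simpa using congrArg (count .a) h
  · simpa using congrArg (count .b) h

theorem abWord_mem_Lvee_iff : abWord i j ∈ Lvee ↔ j = i ∨ j = 2 * i := by
  simp [Lvee]

theorem eq_nil_of_count_eq_zero (ha : w.count .a = 0) (hb : w.count .b = 0) : w = [] :=
  eq_nil_iff_forall_not_mem.2 fun x hx => by cases x <;> simp_all [← count_pos_iff]

theorem replicate_append_abWord : replicate k .a ++ abWord i j = abWord (k + i) j := by
  rw [abWord, abWord, ← append_assoc, replicate_append_replicate]

theorem abWord_append_replicate : abWord i j ++ replicate k .b = abWord i (j + k) := by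
  rw [abWord, abWord, append_assoc, replicate_append_replicate]

theorem replicate_append_cons_abWord :
    replicate k .a ++ .a :: abWord i j = abWord (k + i + 1) j := by
  rw [add_assoc, ← replicate_append_abWord]
  rfl

theorem abWord_append_cons_replicate :
    abWord i j ++ .b :: replicate k .b = abWord i (j + k + 1) := by
  rw [add_assoc, ← abWord_append_replicate, replicate_succ]

theorem append_cons_eq_abWord (h : u ++ x :: v = abWord i j) :
    (x = .a ∧ ∃ i₁ i₂, i = i₁ + i₂ + 1 ∧ u = replicate i₁ .a ∧ v = abWord i₂ j) ∨
    (x = .b ∧ ∃ j₁ j₂, j = j₁ + j₂ + 1 ∧ u = abWord i j₁ ∧ v = replicate j₂ .b) := by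
  rcases append_eq_append_iff.1 h with ⟨_ | ⟨y, m⟩, hm, hxv⟩ | ⟨m, rfl, hm⟩
  · obtain ⟨hj, hx, hv⟩ : v.length + 1 = j ∧ x = .b ∧ v = replicate v.length .b := by
      simpa [eq_replicate_iff] using hxv
    rw [append_nil] at hm
    subst hm
    exact .inr ⟨hx, 0, v.length, by omega, by simp [abWord], hv⟩
  · obtain ⟨hi, hu, hym⟩ := append_eq_replicate_iff.1 hm.symm
    rw [length_cons, replicate_succ, cons_eq_cons] at hym
    rw [cons_append, cons_eq_cons] at hxv
    obtain ⟨rfl, rfl⟩ := hxv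
    rw [length_cons] at hi
    exact .inl ⟨hym.1, u.length, m.length, by omega, hu, by rw [abWord, ← hym.2]⟩
  · obtain ⟨hj, hm, hxv⟩ := append_eq_replicate_iff.1 hm.symm
    rw [length_cons, replicate_succ, cons_eq_cons] at hxv
    rw [length_cons] at hj
    exact .inr ⟨hxv.1, m.length, v.length, by omega, by rw [abWord, ← hm], hxv.2⟩

end abWord

/-- In a round, `a₁`/`a₂` wait for the `a` and `b₁`, `bb₂`, `b₂` for the `b`s still to be read;
`done` accepts only the empty tape. -/
inductive LveeState : Type
  | a₁ | b₁ | a₂ | bb₂ | b₂ | done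
  deriving DecidableEq

instance : Fintype LveeState where
  elems := {.a₁, .b₁, .a₂, .bb₂, .b₂, .done}
  complete := by rintro (_ | _ | _ | _ | _ | _) <;> simp

namespace LveeState

def tl : LveeState → Set (List Letter)
  | a₁ | a₂ => {[.b]}
  | b₁ | bb₂ | b₂ => {[.a]}
  | done => ∅

def delta : LveeState → Letter → Set LveeState
  | a₁, .a => {b₁}
  | b₁, .b => {a₁, done}
  | a₂, .a => {bb₂}
  | bb₂, .b => {b₂}
  | b₂, .b => {a₂, done}
  | _, _ => ∅

def endB : LveeState → EndBehavior LveeState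
  | done => .accept
  | _ => .reject

end LveeState

def lveeAutomaton : RNFAwtw Letter LveeState where
  init := {.a₁, .a₂, .done}
  tl := LveeState.tl
  delta := LveeState.delta
  endB := LveeState.endB
  tl_fin q := by cases q <;> simp [LveeState.tl]
  code_ne q := by cases q <;> simp [LveeState.tl]
  prefix_code q u hu v hv huv := by
    have hlen : ∀ w ∈ q.tl ∪ {w | ∃ x, (q.delta x).Nonempty ∧ w = [x]}, w.length = 1 := by
      rintro w (hw | ⟨_, _, rfl⟩)
      · cases q <;> simp_all [LveeState.tl]
      · rfl
    exact huv.eq_of_length (by rw [hlen u hu, hlen v hv])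
  tl_head q t ht x hx := by
    cases q <;> cases x <;> simp_all [LveeState.tl, LveeState.delta, Set.Nonempty]

namespace lveeAutomaton

open LveeState

def Inv : Conf Letter LveeState → Prop
  | .state a₁ w => w.count .b = w.count .a
  | .state b₁ w => w.count .b = w.count .a + 1
  | .state a₂ w => w.count .b = 2 * w.count .a
  | .state bb₂ w => w.count .b = 2 * w.count .a + 2
  | .state b₂ w => w.count .b = 2 * w.count .a + 1
  | .state done w => w = []
  | .accept => True
  | .reject => False

theorem inv_of_step {c c' : Conf Letter LveeState} (h : lveeAutomaton.Step c c')
    (h' : Inv c') : Inv c := by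
  cases h with
  | @read q _ x _ _ _ hq =>
    cases q <;> cases x <;>
      simp only [lveeAutomaton, delta, Set.mem_insert_iff, Set.mem_singleton_iff,
        Set.mem_empty_iff_false] at hq <;>
      rcases hq with rfl | rfl <;> simp_all [Inv] <;> omega
  | @haltAccept q _ hw he =>
    cases q <;> simp only [lveeAutomaton, endB, reduceCtorEq] at he
    by_contra hne
    obtain ⟨t, ht, -⟩ := hw.exists_mem_prefix hne
    exact ht
  | stuck | haltReject => exact h'.elim
  | @goOn q _ _ _ _ he => cases q <;> simp [lveeAutomaton, endB] at he

theorem inv_of_reflTransGen_accept {c : Conf Letter LveeState}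
    (h : ReflTransGen lveeAutomaton.Step c .accept) : Inv c := by
  induction h using Relation.ReflTransGen.head_induction_on with
  | refl => trivial
  | head hs _ ih => exact inv_of_step hs ih

theorem step_erase_a {q q' : LveeState} (htl : q.tl = {[.b]}) (hq : q' ∈ q.delta .a)
    {w : List Letter} (hw : .a ∈ w) :
    lveeAutomaton.Step (.state q w) (.state q' (w.erase .a)) :=
  lveeAutomaton.step_erase (by rintro (_ | _) h <;> simp_all [lveeAutomaton]) hq hw

theorem step_erase_b {q q' : LveeState} (htl : q.tl = {[.a]}) (hq : q' ∈ q.delta .b)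
    {w : List Letter} (hw : .b ∈ w) :
    lveeAutomaton.Step (.state q w) (.state q' (w.erase .b)) :=
  lveeAutomaton.step_erase (by rintro (_ | _) h <;> simp_all [lveeAutomaton]) hq hw

theorem reflTransGen_accept_done : ReflTransGen lveeAutomaton.Step (.state done []) .accept :=
  .single (.haltAccept (.nil _) rfl)

theorem reflTransGen_a₁_erase {w : List Letter} (ha : 0 < w.count .a) (hb : 0 < w.count .b)
    {q : LveeState} (hq : q ∈ b₁.delta .b) :
    ReflTransGen lveeAutomaton.Step (.state a₁ w) (.state q ((w.erase .a).erase .b)) :=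
  .head (step_erase_a (q' := b₁) rfl (by simp [delta]) (count_pos_iff.1 ha))
    (.single (step_erase_b rfl hq
      (count_pos_iff.1 (by rwa [count_erase_of_ne (by decide)]))))

theorem reflTransGen_a₂_erase {w : List Letter} (ha : 0 < w.count .a) (hb : 2 ≤ w.count .b)
    {q : LveeState} (hq : q ∈ b₂.delta .b) :
    ReflTransGen lveeAutomaton.Step (.state a₂ w)
      (.state q (((w.erase .a).erase .b).erase .b)) :=
  .head (step_erase_a (q' := bb₂) rfl (by simp [delta]) (count_pos_iff.1 ha))
    (.head (step_erase_b (q' := b₂) rfl (by simp [delta])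
      (count_pos_iff.1 (by rw [count_erase_of_ne (by decide)]; omega)))
    (.single (step_erase_b rfl hq
      (count_pos_iff.1 (by rw [count_erase_self, count_erase_of_ne (by decide)]; omega)))))

theorem reflTransGen_accept_a₁ (m : ℕ) {w : List Letter} (ha : w.count .a = m + 1)
    (hb : w.count .b = m + 1) : ReflTransGen lveeAutomaton.Step (.state a₁ w) .accept := by
  induction m generalizing w with
  | zero =>
    refine (reflTransGen_a₁_erase (by omega) (by omega) (q := done) (by simp [delta])).trans ?_
    rw [eq_nil_of_count_eq_zero (w := (w.erase .a).erase .b)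
      (by simp [count_erase_of_ne, ha]) (by simp [count_erase_of_ne, hb])]
    exact reflTransGen_accept_done
  | succ m ih =>
    exact (reflTransGen_a₁_erase (by omega) (by omega) (q := a₁) (by simp [delta])).trans
      (ih (by simp [count_erase_of_ne, ha]) (by simp [count_erase_of_ne, hb]))

theorem reflTransGen_accept_a₂ (m : ℕ) {w : List Letter} (ha : w.count .a = m + 1)
    (hb : w.count .b = 2 * (m + 1)) : ReflTransGen lveeAutomaton.Step (.state a₂ w) .accept := by
  induction m generalizing w with
  | zero =>
    refine (reflTransGen_a₂_erase (by omega) (by omega) (q := done) (by simp [delta])).trans ?_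
    rw [eq_nil_of_count_eq_zero (w := ((w.erase .a).erase .b).erase .b)
      (by simp [count_erase_of_ne, ha]) (by simp [count_erase_of_ne, hb])]
    exact reflTransGen_accept_done
  | succ m ih =>
    exact (reflTransGen_a₂_erase (by omega) (by omega) (q := a₂) (by simp [delta])).trans
      (ih (by simp [count_erase_of_ne, ha]) (by
        simp only [count_erase_self, count_erase_of_ne, ne_eq, reduceCtorEq, not_false_eq_true, hb]
        omega))

theorem lang_eq : lveeAutomaton.lang = Lvee := by
  ext w
  constructor
  · rintro ⟨q, hq, h⟩
    have hinv := inv_of_reflTransGen_accept h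
    simp only [lveeAutomaton, Set.mem_insert_iff, Set.mem_singleton_iff] at hq
    rcases hq with rfl | rfl | rfl
    · exact ⟨_, rfl, .inl hinv⟩
    · exact ⟨_, rfl, .inr hinv⟩
    · exact ⟨0, by simp [show w = [] from hinv]⟩
  · rintro ⟨_ | m, ha, hb⟩
    · rw [eq_nil_of_count_eq_zero ha (by omega)]
      exact ⟨done, by simp [lveeAutomaton], reflTransGen_accept_done⟩
    · rcases hb with hb | hb
      · exact ⟨a₁, by simp [lveeAutomaton], reflTransGen_accept_a₁ m ha hb⟩
      · exact ⟨a₂, by simp [lveeAutomaton], reflTransGen_accept_a₂ m ha hb⟩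

end lveeAutomaton

theorem acceptedByRNFAwtw_Lvee : AcceptedByRNFAwtw Lvee :=
  ⟨LveeState, inferInstance, lveeAutomaton, lveeAutomaton.lang_eq⟩

namespace RNFAwtw

variable {Q : Type} {A : RNFAwtw Letter Q} {q q' : Q} {w : List Letter}
  {i j i' j' Δi Δj L : ℕ}

theorem instar_abWord_add_left (hL : ∀ q, ∀ t ∈ A.tl q, t.length ≤ L) (hi : L < i)
    (h : InStar (A.tl q) (abWord i j)) (hΔ : L ! ∣ Δi) :
    InStar (A.tl q) (abWord (i + Δi) j) := by
  rw [add_comm, ← replicate_append_abWord]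
  exact h.replicate_append (A.code_ne q) (hL q) hi hΔ

theorem instar_abWord_add_right (hL : ∀ q, ∀ t ∈ A.tl q, t.length ≤ L) (hj : L < j)
    (h : InStar (A.tl q) (abWord i j)) (hΔ : L ! ∣ Δj) :
    InStar (A.tl q) (abWord i (j + Δj)) := by
  rw [← abWord_append_replicate]
  exact h.append_replicate (A.code_ne q) (hL q) hj hΔ

theorem instar_abWord_add (hL : ∀ q, ∀ t ∈ A.tl q, t.length ≤ L) (hi : L < i) (hj : L < j)
    (h : InStar (A.tl q) (abWord i j)) (hΔi : L ! ∣ Δi) (hΔj : L ! ∣ Δj) :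
    InStar (A.tl q) (abWord (i + Δi) (j + Δj)) :=
  instar_abWord_add_right hL hj (instar_abWord_add_left hL hi h hΔi) hΔj

theorem step_abWord_cases (h : A.Step (.state q (abWord i j)) (.state q' w)) :
    (∃ i₁ i₂, i = i₁ + i₂ + 1 ∧ InStar (A.tl q) (replicate i₁ .a) ∧ q' ∈ A.delta q .a ∧
      w = abWord (i₁ + i₂) j) ∨
    (∃ j₁ j₂, j = j₁ + j₂ + 1 ∧ InStar (A.tl q) (abWord i j₁) ∧ q' ∈ A.delta q .b ∧
      w = abWord i (j₁ + j₂)) ∨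
    (InStar (A.tl q) (abWord i j) ∧ (∃ S, A.endB q = .cont S ∧ q' ∈ S) ∧ w = abWord i j) := by
  generalize hw : abWord i j = w₀ at h
  cases h with
  | read hu hq =>
    rcases append_cons_eq_abWord hw.symm with
      ⟨rfl, i₁, i₂, rfl, rfl, rfl⟩ | ⟨rfl, j₁, j₂, rfl, rfl, rfl⟩
    · exact .inl ⟨i₁, i₂, rfl, hu, hq, replicate_append_abWord⟩
    · exact .inr (.inl ⟨j₁, j₂, rfl, hu, hq, abWord_append_replicate⟩)
  | goOn hw' he hq => exact .inr (.inr ⟨hw', ⟨_, he, hq⟩, rfl⟩)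

theorem step_abWord_le (h : A.Step (.state q (abWord i j)) (.state q' w)) :
    ∃ i' j', w = abWord i' j' ∧ i' ≤ i ∧ j' ≤ j ∧ i + j ≤ i' + j' + 1 := by
  rcases step_abWord_cases h with
    ⟨i₁, i₂, rfl, -, -, rfl⟩ | ⟨j₁, j₂, rfl, -, -, rfl⟩ | ⟨-, -, rfl⟩ <;>
  exact ⟨_, _, rfl, by omega, by omega, by omega⟩

theorem step_abWord_shift (hL : ∀ q, ∀ t ∈ A.tl q, t.length ≤ L)
    (h : A.Step (.state q (abWord i j)) (.state q' (abWord i' j'))) (hi : L < i') (hj : L < j')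
    (hΔi : L ! ∣ Δi) (hΔj : L ! ∣ Δj) :
    A.Step (.state q (abWord (i + Δi) (j + Δj))) (.state q' (abWord (i' + Δi) (j' + Δj))) := by
  rcases step_abWord_cases h with
    ⟨i₁, i₂, rfl, hu, hq, hw⟩ | ⟨j₁, j₂, rfl, hu, hq, hw⟩ | ⟨hu, ⟨S, hS, hq⟩, hw⟩ <;>
  obtain ⟨rfl, rfl⟩ := abWord_inj.1 hw.symm
  · have := Step.read (v := abWord (i₂ + Δi) (j + Δj)) hu hq
    rw [replicate_append_cons_abWord, replicate_append_abWord] at this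
    convert this using 2 <;> congr 1 <;> omega
  · have := Step.read (v := replicate (j₂ + Δj) .b) (instar_abWord_add_left hL hi hu hΔi) hq
    rw [abWord_append_cons_replicate, abWord_append_replicate] at this
    convert this using 2 <;> congr 1 <;> omega
  · exact .goOn (instar_abWord_add hL hi hj hu hΔi hΔj) hS hq

theorem step_accept_abWord_shift (hL : ∀ q, ∀ t ∈ A.tl q, t.length ≤ L)
    (h : A.Step (.state q (abWord i j)) .accept) (hi : L < i) (hj : L < j)
    (hΔi : L ! ∣ Δi) (hΔj : L ! ∣ Δj) :
    A.Step (.state q (abWord (i + Δi) (j + Δj))) .accept := by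
  generalize hw : abWord i j = w at h
  cases h with
  | haltAccept hu he => exact .haltAccept (instar_abWord_add hL hi hj (hw ▸ hu) hΔi hΔj) he

theorem reflTransGen_abWord_induction {motive : Q → ℕ → ℕ → Prop} (refl : motive q i j)
    (tail : ∀ {q' i' j' q'' i'' j''},
      ReflTransGen A.Step (.state q (abWord i j)) (.state q' (abWord i' j')) →
      A.Step (.state q' (abWord i' j')) (.state q'' (abWord i'' j'')) →
      motive q' i' j' → motive q'' i'' j'')
    (h : ReflTransGen A.Step (.state q (abWord i j)) (.state q' w)) :
    ∃ i' j', w = abWord i' j' ∧ motive q' i' j' := by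
  generalize hc : Conf.state q' w = c at h
  induction h generalizing q' w with
  | refl => cases hc; exact ⟨i, j, rfl, refl⟩
  | @tail b _ hb hs ih =>
    subst hc
    cases b with
    | state q'' w'' =>
      obtain ⟨i'', j'', rfl, hm⟩ := ih rfl
      obtain ⟨i', j', rfl, -⟩ := step_abWord_le hs
      exact ⟨i', j', rfl, tail hb hs hm⟩
    | accept => exact (A.not_step_accept hs).elim
    | reject => exact (A.not_step_reject hs).elim

theorem reflTransGen_abWord_le
    (h : ReflTransGen A.Step (.state q (abWord i j)) (.state q' w)) :
    ∃ i' j', w = abWord i' j' ∧ i' ≤ i ∧ j' ≤ j := by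
  refine reflTransGen_abWord_induction (motive := fun _ i' j' => i' ≤ i ∧ j' ≤ j)
    ⟨le_rfl, le_rfl⟩ (fun _ hs hm => ?_) h
  obtain ⟨_, _, hw, h₁, h₂, -⟩ := step_abWord_le hs
  obtain ⟨rfl, rfl⟩ := abWord_inj.1 hw
  omega

theorem reflTransGen_abWord_shift (hL : ∀ q, ∀ t ∈ A.tl q, t.length ≤ L)
    (h : ReflTransGen A.Step (.state q (abWord i j)) (.state q' (abWord i' j')))
    (hi : L < i') (hj : L < j') (hΔi : L ! ∣ Δi) (hΔj : L ! ∣ Δj) :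
    ReflTransGen A.Step (.state q (abWord (i + Δi) (j + Δj)))
      (.state q' (abWord (i' + Δi) (j' + Δj))) := by
  obtain ⟨i'', j'', hw, hm⟩ := reflTransGen_abWord_induction
    (motive := fun q' i' j' => L < i' → L < j' → ReflTransGen A.Step
      (.state q (abWord (i + Δi) (j + Δj))) (.state q' (abWord (i' + Δi) (j' + Δj))))
    (fun _ _ => .refl) (fun _ hs hm hi hj => by
      obtain ⟨_, _, hw, h₁, h₂, -⟩ := step_abWord_le hs
      obtain ⟨rfl, rfl⟩ := abWord_inj.1 hw
      exact (hm (by omega) (by omega)).tail (step_abWord_shift hL hs hi hj hΔi hΔj)) h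
  obtain ⟨rfl, rfl⟩ := abWord_inj.1 hw
  exact hm hi hj

theorem exists_reflTransGen_abWord_sum_eq
    (h : ReflTransGen A.Step (.state q (abWord i j)) (.state q' (abWord i' j')))
    {k : ℕ} (hk : i' + j' ≤ k) (hk' : k ≤ i + j) :
    ∃ q'' i'' j'', ReflTransGen A.Step (.state q (abWord i j)) (.state q'' (abWord i'' j'')) ∧
      i'' + j'' = k := by
  obtain ⟨i'', j'', hw, hm⟩ := reflTransGen_abWord_induction
    (motive := fun q' i' j' => i' + j' ≤ k → ∃ q'' i'' j'',
      ReflTransGen A.Step (.state q (abWord i j)) (.state q'' (abWord i'' j'')) ∧ i'' + j'' = k)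
    (fun _ => ⟨q, i, j, .refl, by omega⟩) (fun {_ i₁ j₁ _ _ _} hr hs hm hk => by
      obtain ⟨_, _, hw, -, -, hsum⟩ := step_abWord_le hs
      obtain ⟨rfl, rfl⟩ := abWord_inj.1 hw
      by_cases hk' : i₁ + j₁ ≤ k
      · exact hm hk'
      · exact ⟨_, _, _, hr.tail hs, by omega⟩) h
  obtain ⟨rfl, rfl⟩ := abWord_inj.1 hw
  exact hm hk

theorem reflTransGen_accept_pump (hL : ∀ q, ∀ t ∈ A.tl q, t.length ≤ L) {q₀ : Q}
    {x y α β : ℕ}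
    (h₁ : ReflTransGen A.Step (.state q₀ (abWord x y)) (.state q (abWord (i + α) (j + β))))
    (h₂ : ReflTransGen A.Step (.state q (abWord (i + α) (j + β))) (.state q (abWord i j)))
    (h₃ : ReflTransGen A.Step (.state q (abWord (i + α) (j + β))) .accept)
    (hi : L < i) (hj : L < j) (hα : L ! ∣ α) (hβ : L ! ∣ β) :
    ReflTransGen A.Step (.state q₀ (abWord (x + α) (y + β))) .accept :=
  ((reflTransGen_abWord_shift hL h₁ (by omega) (by omega) hα hβ).trans
    (reflTransGen_abWord_shift hL h₂ hi hj hα hβ)).trans h₃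

section Lvee

variable {q₀ : Q}

theorem eq_of_reflTransGen_of_modEq (hdet : A.Deterministic)
    (hL : ∀ q, ∀ t ∈ A.tl q, t.length ≤ L)
    (hacc : ∀ x y, ReflTransGen A.Step (.state q₀ (abWord x y)) .accept ↔ y = x ∨ y = 2 * x)
    {n : ℕ} (hn : L ! ∣ n)
    (h₁ : ReflTransGen A.Step (.state q₀ (abWord n n)) (.state q (abWord i j)))
    (h₂ : ReflTransGen A.Step (.state q (abWord i j)) (.state q (abWord i' j')))
    (hi : i' ≡ i [MOD L !]) (hj : j' ≡ j [MOD L !]) (hi' : L < i') (hj' : L < j') :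
    i = i' ∧ j = j' := by
  obtain ⟨_, _, hw, hii, hjj⟩ := reflTransGen_abWord_le h₂
  obtain ⟨rfl, rfl⟩ := abWord_inj.1 hw
  obtain ⟨_, _, hw, hin, hjn⟩ := reflTransGen_abWord_le h₁
  obtain ⟨rfl, rfl⟩ := abWord_inj.1 hw
  obtain ⟨α, rfl⟩ := Nat.exists_eq_add_of_le hii
  obtain ⟨β, rfl⟩ := Nat.exists_eq_add_of_le hjj
  have hα : L ! ∣ α := by simpa using (Nat.modEq_iff_dvd' hii).1 hi
  have hβ : L ! ∣ β := by simpa using (Nat.modEq_iff_dvd' hjj).1 hj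
  have run₁ := reflTransGen_accept_pump hL h₁ h₂
    (reflTransGen_accept_of_reflTransGen hdet h₁ ((hacc n n).2 (.inl rfl))) hi' hj' hα hβ
  have h₁' := reflTransGen_abWord_shift hL h₁ (by omega) (by omega) (dvd_zero _) hn
  have h₂' := reflTransGen_abWord_shift hL h₂ hi' hj' (dvd_zero _) hn
  simp only [add_zero, add_right_comm j' β n] at h₁' h₂'
  have run₂ := reflTransGen_accept_pump hL h₁' h₂'
    (reflTransGen_accept_of_reflTransGen hdet h₁' ((hacc n (n + n)).2 (.inr (two_mul n).symm)))
    hi' (by omega) hα hβ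
  have := (hacc _ _).1 run₁
  have := (hacc _ _).1 run₂
  omega

theorem exists_reflTransGen_abWord_sum_add_eq (hL : ∀ q, ∀ t ∈ A.tl q, t.length ≤ L)
    (hacc : ∀ x y, ReflTransGen A.Step (.state q₀ (abWord x y)) .accept ↔ y = x ∨ y = 2 * x)
    {n k : ℕ} (hk : k + L < n) :
    ∃ q i j, ReflTransGen A.Step (.state q₀ (abWord n n)) (.state q (abWord i j)) ∧
      i + j + k = 2 * n := by
  obtain ⟨q₁, w₁, h₁, hs⟩ := A.exists_step_accept_of_reflTransGen ((hacc n n).2 (.inl rfl))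
  obtain ⟨i₁, j₁, rfl, hi₁, hj₁⟩ := reflTransGen_abWord_le h₁
  have hsmall : i₁ ≤ L ∨ j₁ ≤ L := by
    by_contra! h
    have := (hacc (n + L !) (n + 0)).1 <|
      (reflTransGen_abWord_shift hL h₁ h.1 h.2 dvd_rfl (dvd_zero _)).tail
        (step_accept_abWord_shift hL hs h.1 h.2 dvd_rfl (dvd_zero _))
    have := Nat.factorial_pos L
    omega
  obtain ⟨q, i, j, h, hsum⟩ :=
    exists_reflTransGen_abWord_sum_eq h₁ (k := 2 * n - k) (by omega) (by omega)
  exact ⟨q, i, j, h, by omega⟩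

end Lvee

end RNFAwtw

open RNFAwtw in
theorem not_acceptedByRDFAwtw_Lvee : ¬ AcceptedByRDFAwtw Lvee := by
  rintro ⟨Q, _, A, hdet, hlang⟩
  have := Fintype.ofFinite Q
  obtain ⟨q₀, hinit⟩ := hdet.1
  have : Nonempty Q := ⟨q₀⟩
  have hacc (x y : ℕ) :
      ReflTransGen A.Step (.state q₀ (abWord x y)) .accept ↔ y = x ∨ y = 2 * x := by
    rw [← abWord_mem_Lvee_iff, ← hlang]
    simp [RNFAwtw.lang, RNFAwtw.Accepts, hinit]
  obtain ⟨L, hL⟩ := A.exists_tl_length_le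
  set M := Fintype.card Q * (L ! * L !)
  set n := L ! * (M + L + 1)
  have hn : M + L < n := Nat.lt_of_lt_of_le (Nat.lt_succ_self _)
    (Nat.le_mul_of_pos_left _ (Nat.factorial_pos L))
  choose! q i j h hsum using fun k (hk : k ∈ Finset.range (M + 1)) =>
    exists_reflTransGen_abWord_sum_add_eq hL hacc (n := n) (k := k)
      (by rw [Finset.mem_range] at hk; omega)
  have hlarge : ∀ k ∈ Finset.range (M + 1), L < i k ∧ L < j k := by
    intro k hk
    obtain ⟨_, _, hw, hi, hj⟩ := reflTransGen_abWord_le (h k hk)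
    obtain ⟨rfl, rfl⟩ := abWord_inj.1 hw
    have := hsum k hk
    rw [Finset.mem_range] at hk
    omega
  obtain ⟨k, hk, k', hk', hne, heq⟩ := Finset.exists_ne_map_eq_of_card_lt_of_maps_to
    (s := Finset.range (M + 1)) (t := Finset.univ ×ˢ Finset.range L ! ×ˢ Finset.range L !)
    (f := fun k => (q k, i k % L !, j k % L !)) (by simp [M])
    (fun k _ => by simp [Nat.mod_lt, Nat.factorial_pos])
  simp only [Prod.mk.injEq] at heq
  obtain ⟨hq, hi, hj⟩ := heq
  have := hsum k hk
  have := hsum k' hk'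
  rcases (h k hk).total_of_right_unique hdet.rightUnique (h k' hk') with h' | h'
  · rw [← hq] at h'
    have := eq_of_reflTransGen_of_modEq hdet hL hacc (dvd_mul_right _ _) (h k hk) h'
      hi.symm hj.symm (hlarge k' hk').1 (hlarge k' hk').2
    omega
  · rw [hq] at h'
    have := eq_of_reflTransGen_of_modEq hdet hL hacc (dvd_mul_right _ _) (h k' hk') h' hi hj
      (hlarge k hk).1 (hlarge k hk).2
    omega

/-- The class of RDFAwtw languages is properly contained in the class of
RNFAwtw languages: every RDFAwtw language is an RNFAwtw language, and `L_∨`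
is an RNFAwtw language that is not an RDFAwtw language. -/
theorem RDFAwtw_lt_RNFAwtw :
    (∀ (α : Type), Finite α →
      ∀ L : Set (List α), AcceptedByRDFAwtw L → AcceptedByRNFAwtw L) ∧
    AcceptedByRNFAwtw Lvee ∧ ¬ AcceptedByRDFAwtw Lvee :=
  ⟨fun _ _ _ ⟨Q, hQ, A, _, hA⟩ => ⟨Q, hQ, A, hA⟩, acceptedByRNFAwtw_Lvee,
    not_acceptedByRDFAwtw_Lvee⟩
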